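/- arXiv:1305.5247 — 6 statements merged into one kernel-verified Lean document; each statement's English description precedes it below -/
import Mathlib

section
/- Let p be a prime and q a power of p. For every monic separable additive polynomial A over an algebraically closed field of characteristic p whose set of roots is contained in the finite field F_q, there exists a monic separable additive polynomial B such that the composition A ∘ B equals the polynomial x^q - x. -/
/-!
Let `F_q ⊆ k` be the roots of `X^q - X`. The fibres of `A` on `F_q` are cosets of
`ker A ⊆ F_q`, which has `deg A` elements as `A` is separable, so
`B := ∏_{h ∈ A(F_q)} (X - h)` gives a monic `B ∘ A` of degree at most `q` vanishing on
`F_q`, i.e. `B ∘ A = X^q - X`. Since the roots of `A` are fixed by `x ↦ x^q`, `A` commutes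
with `X^q - X`, hence `(A ∘ B) ∘ A = A ∘ (X^q - X) = (X^q - X) ∘ A`, and cancelling `A` on
the right gives `A ∘ B = X^q - X`. Finally `A(B(x + y) - B(x) - B(y)) = 0` identically,
which forces `B(x + y) - B(x) - B(y)` to be the constant `-B(0) = 0`.
-/

open Polynomial Finset Lagrange

namespace Polynomial

def IsAdditive {R : Type*} [Semiring R] (f : R[X]) : Prop :=
  ∀ x y : R, f.eval (x + y) = f.eval x + f.eval y

namespace IsAdditive

variable {R : Type*} [Ring R] {f : R[X]}

def toAddMonoidHom (hf : f.IsAdditive) : R →+ R :=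
  AddMonoidHom.mk' f.eval hf

theorem eval_zero (hf : f.IsAdditive) : f.eval 0 = 0 :=
  map_zero hf.toAddMonoidHom

theorem eval_sub (hf : f.IsAdditive) (x y : R) : f.eval (x - y) = f.eval x - f.eval y :=
  map_sub hf.toAddMonoidHom x y

theorem natDegree_ne_zero [Nontrivial R] (hf : f.IsAdditive) (hm : f.Monic) :
    f.natDegree ≠ 0 := fun h => by
  simpa [hm.natDegree_eq_zero.mp h] using hf.eval_zero

end IsAdditive

theorem isAdditive_X_pow_sub_X {R : Type*} [CommRing R] (p ν : ℕ) [ExpChar R p] :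
    (X ^ p ^ ν - X : R[X]).IsAdditive := fun x y => by
  simp only [eval_sub, eval_pow, eval_X, add_pow_expChar_pow]
  ring

theorem comp_left_injective {R : Type*} [CommRing R] [IsDomain R] {g : R[X]}
    (hg : g.natDegree ≠ 0) : Function.Injective fun f : R[X] => f.comp g := fun f₁ f₂ h => by
  have hsub : (f₁ - f₂).comp g = 0 := by rw [sub_comp, sub_eq_zero.mpr h]
  rcases comp_eq_zero_iff.mp hsub with h | ⟨-, hC⟩
  · exact sub_eq_zero.mp h
  · exact absurd (hC ▸ natDegree_C _) hg

variable {k : Type*} [Field k]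

theorem nodal_roots_toFinset [DecidableEq k] {f : k[X]} (hm : f.Monic) (hs : f.Splits)
    (hsep : f.Separable) : nodal f.roots.toFinset id = f := by
  rw [nodal, prod_eq_multiset_prod, Multiset.toFinset_val, (nodup_roots hsep).dedup]
  exact (hs.eq_prod_roots_of_monic hm).symm

theorem eq_nodal_of_monic_of_natDegree_le {f : k[X]} {s : Finset k} (hm : f.Monic)
    (hdeg : f.natDegree ≤ #s) (hroot : ∀ c ∈ s, f.eval c = 0) : f = nodal s id := by
  have hdeg_eq : f.natDegree = #s := by
    refine le_antisymm hdeg (not_lt.mp fun hlt => hm.ne_zero ?_)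
    refine eq_zero_of_degree_lt_of_eval_finset_eq_zero s ?_ hroot
    exact (degree_le_natDegree).trans_lt (by exact_mod_cast hlt)
  refine eq_of_degree_sub_lt_of_eval_finset_eq s ?_ fun c hc => ?_
  · have hdeg' : f.degree = (nodal s id).degree := by
      rw [degree_nodal, degree_eq_natDegree hm.ne_zero, hdeg_eq]
    refine (degree_sub_lt_left hdeg' hm.ne_zero ?_).trans_eq ?_
    · rw [hm.leadingCoeff, nodal_monic.leadingCoeff]
    · rw [degree_eq_natDegree hm.ne_zero, hdeg_eq]
  · rw [hroot c hc]
    exact (eval_nodal_at_node (v := id) hc).symm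

theorem IsAdditive.nodal_image_comp [DecidableEq k] {A : k[X]} (hA : A.IsAdditive)
    (hm : A.Monic) (hs : A.Splits) (hsep : A.Separable) {s : Finset k}
    (hclosed : ∀ a ∈ s, ∀ g ∈ A.roots, a + g ∈ s) :
    (nodal (s.image A.eval) id).comp A = nodal s id := by
  have hcard : A.natDegree = #A.roots.toFinset := by
    rw [← natDegree_nodal (s := A.roots.toFinset) (v := id), nodal_roots_toFinset hm hs hsep]
  have hfibre : ∀ b ∈ s.image A.eval, #A.roots.toFinset ≤ #{a ∈ s | A.eval a = b} := by
    intro b hb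
    obtain ⟨a, ha, rfl⟩ := mem_image.mp hb
    refine card_le_card_of_injOn (a + ·) (fun g hg => ?_) fun _ _ _ _ h => add_left_cancel h
    have hg : g ∈ A.roots := Multiset.mem_toFinset.mp hg
    rw [mem_coe, mem_filter, hA, (isRoot_of_mem_roots hg).eq_zero, add_zero]
    exact ⟨hclosed a ha g hg, rfl⟩
  refine eq_nodal_of_monic_of_natDegree_le (nodal_monic.comp hm (hA.natDegree_ne_zero hm)) ?_
    fun a ha => ?_
  · rw [natDegree_comp, natDegree_nodal, hcard, mul_comm]
    exact mul_card_image_le_card s _ hfibre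
  · rw [eval_comp]
    exact eval_nodal_at_node (v := id) (mem_image_of_mem _ ha)

theorem eval_pow_expChar_pow_of_roots {p : ℕ} [ExpChar k p] {ν : ℕ} {A : k[X]} (hm : A.Monic)
    (hs : A.Splits) (hroots : ∀ a ∈ A.roots, a ^ p ^ ν = a) (x : k) :
    A.eval (x ^ p ^ ν) = A.eval x ^ p ^ ν := by
  rw [hs.eval_eq_prod_roots_of_monic hm, hs.eval_eq_prod_roots_of_monic hm,
    ← Multiset.prod_map_pow]
  refine congrArg _ (Multiset.map_congr rfl fun a ha => ?_)
  rw [sub_pow_expChar_pow, hroots a ha]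

variable [Infinite k]

theorem IsAdditive.comp_X_pow_sub_X_comm {A : k[X]} (hA : A.IsAdditive) {q : ℕ}
    (hfrob : ∀ x, A.eval (x ^ q) = A.eval x ^ q) :
    A.comp (X ^ q - X) = (X ^ q - X : k[X]).comp A :=
  Polynomial.funext fun x => by
    simp only [eval_comp, Polynomial.eval_sub, eval_pow, eval_X, hA.eval_sub, hfrob]

theorem IsAdditive.of_comp {A B : k[X]} (hA : A.IsAdditive) (hA0 : A ≠ 0)
    (hAB : (A.comp B).IsAdditive) (hB0 : B.eval 0 = 0) : B.IsAdditive := by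
  intro x y
  set D : k[X] := B.comp (X + C y) - B - C (B.eval y)
  have hD : ∀ z, D.eval z = B.eval (z + y) - B.eval z - B.eval y := fun z => by
    simp [D, eval_comp]
  have hAD : A.comp D = 0 := Polynomial.funext fun z => by
    have hABz := hAB z y
    simp only [eval_comp] at hABz
    rw [eval_comp, hD, hA.eval_sub, hA.eval_sub, hABz, Polynomial.eval_zero]
    ring
  obtain ⟨-, hDC⟩ := (comp_eq_zero_iff.mp hAD).resolve_left hA0
  have hDx : D.eval x = D.eval 0 := by rw [hDC, eval_C, eval_C]
  rw [hD, hD, zero_add, hB0] at hDx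
  linear_combination hDx

end Polynomial

/-- Let `p` be a prime and `q = p^ν` a power of `p`. For every monic separable additive
polynomial `A` over an algebraically closed field `k` of characteristic `p` whose set of
roots is contained in the finite field `F_q ⊆ k` (i.e. every root `x` satisfies `x^q = x`),
there exists a monic separable additive polynomial `B` with `A ∘ B = X^q − X`. -/
theorem stmt0 (p : ℕ) (hp : p.Prime) (ν : ℕ) (hν : 0 < ν) (q : ℕ) (hq : q = p ^ ν)
    (k : Type) [Field k] [IsAlgClosed k] [CharP k p]
    (A : Polynomial k) (hmonic : A.Monic) (hsep : A.Separable)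
    (hadd : ∀ x y : k, A.eval (x + y) = A.eval x + A.eval y)
    (hroots : ∀ x : k, A.eval x = 0 → x ^ q = x) :
    ∃ B : Polynomial k, B.Monic ∧ B.Separable ∧
      (∀ x y : k, B.eval (x + y) = B.eval x + B.eval y) ∧
      A.comp B = X ^ q - X := by
  classical
  have := Fact.mk hp
  subst hq
  have hA : A.IsAdditive := hadd
  set P : k[X] := X ^ p ^ ν - X
  have hPm : P.Monic := monic_X_pow_sub (by
    rw [degree_X]; exact_mod_cast Nat.one_lt_pow hν.ne' hp.one_lt)
  have hPsep : P.Separable := galois_poly_separable p _ (dvd_pow_self p hν.ne')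
  set F : Finset k := P.roots.toFinset
  have hF : ∀ x, x ∈ F ↔ x ^ p ^ ν = x := fun x => by
    simp [F, mem_roots hPm.ne_zero, P, sub_eq_zero]
  have hroots_fixed : ∀ a ∈ A.roots, a ^ p ^ ν = a := fun a ha =>
    hroots a (isRoot_of_mem_roots ha)
  set B : k[X] := nodal (F.image A.eval) id
  have hBA : B.comp A = P := by
    rw [hA.nodal_image_comp hmonic (IsAlgClosed.splits A) hsep fun a ha g hg => ?_,
      nodal_roots_toFinset hPm (IsAlgClosed.splits P) hPsep]
    rw [hF] at ha ⊢
    rw [add_pow_expChar_pow, ha, hroots_fixed g hg]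
  have hAP : A.comp P = P.comp A :=
    hA.comp_X_pow_sub_X_comm
      (eval_pow_expChar_pow_of_roots hmonic (IsAlgClosed.splits A) hroots_fixed)
  have hAB : A.comp B = P :=
    comp_left_injective (hA.natDegree_ne_zero hmonic) (by simp only [comp_assoc, hBA, hAP])
  have hB0 : B.eval 0 = 0 :=
    eval_nodal_at_node (v := id)
      (mem_image.mpr ⟨0, (hF 0).mpr (zero_pow (pow_pos hp.pos ν).ne'), hA.eval_zero⟩)
  refine ⟨B, nodal_monic, separable_prod_X_sub_C_iff'.mpr fun _ _ _ _ h => h,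
    hA.of_comp hmonic.ne_zero (hAB ▸ isAdditive_X_pow_sub_X p ν) hB0, hAB⟩
end

section
/- Let p = 2 and n ≥ 1. In the ring W_n(F̄_2) of Witt vectors of length n over an algebraic closure of F_2, for every power r^ν of 2 there exists a unit x ∈ W_n(F_{r^{2ν}}) satisfying Frob_{r^ν}(x) + x = 0, where Frob_{r^ν} acts componentwise by raising to the r^ν power. Consequently the set of solutions of Frob_{r^ν}(x) + x = 0 in W_n(F_{r^{2ν}}) has cardinality r^{nν}. -/
/-- Componentwise Frobenius (raising each coefficient to the `2^e`-th power) on truncated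
Witt vectors of length `n` in characteristic `2`. -/
def wittFrob (n e : ℕ) (F : Type) [CommRing F]
    (x : TruncatedWittVector 2 n F) : TruncatedWittVector 2 n F :=
  TruncatedWittVector.mk 2 fun i => x.coeff i ^ 2 ^ e

section Aux

set_option linter.unusedSectionVars false

open WittVector Polynomial Finset

variable {F : Type} [Field F] [CharP F 2]

local notation "𝕎" => WittVector 2

private lemma frobIter_coeff (e : ℕ) (X : 𝕎 F) (i : ℕ) :
    ((WittVector.frobenius (p := 2) (R := F))^[e] X).coeff i = X.coeff i ^ 2 ^ e := by
  induction e generalizing X with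
  | zero => simp
  | succ e ih =>
    rw [Function.iterate_succ_apply, ih, WittVector.coeff_frobenius_charP, ← pow_mul,
      ← pow_succ']

private lemma vlt (n : ℕ) (x : 𝕎 F) (i : ℕ) (h : i < n) :
    ((WittVector.verschiebung (p := 2) (R := F))^[n] x).coeff i = 0 := by
  induction n generalizing i x with
  | zero => omega
  | succ n ih =>
    rw [Function.iterate_succ_apply']
    cases i with
    | zero => exact WittVector.verschiebung_coeff_zero _
    | succ i =>
      rw [WittVector.verschiebung_coeff_succ]
      exact ih _ _ (by omega)

private lemma vcoeff (n : ℕ) (x : 𝕎 F) :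
    ((WittVector.verschiebung (p := 2) (R := F))^[n] x).coeff n = x.coeff 0 := by
  simpa using WittVector.iterate_verschiebung_coeff (p := 2) x n 0

private lemma add_coeff_of (n : ℕ) (z w : 𝕎 F) (hz : ∀ i < n, z.coeff i = 0)
    (hw : ∀ i < n, w.coeff i = 0) :
    (z + w).coeff n = z.coeff n + w.coeff n := by
  rw [WittVector.eq_iterate_verschiebung hz, WittVector.eq_iterate_verschiebung hw,
    ← iterate_map_add, vcoeff, vcoeff, vcoeff, WittVector.add_coeff_zero]

/-- frobenius iterate commutes with verschiebung iterate (componentwise in char p). -/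
private lemma frob_versch (e n : ℕ) (y : 𝕎 F) :
    (WittVector.frobenius (p := 2) (R := F))^[e]
        ((WittVector.verschiebung (p := 2) (R := F))^[n] y)
      = (WittVector.verschiebung (p := 2) (R := F))^[n]
          ((WittVector.frobenius (p := 2) (R := F))^[e] y) := by
  ext i
  rcases lt_or_ge i n with h | h
  · rw [frobIter_coeff, vlt n _ i h, vlt n _ i h, zero_pow (by positivity)]
  · obtain ⟨k, rfl⟩ := Nat.exists_eq_add_of_le h
    have h1 : ∀ z : 𝕎 F, ((WittVector.verschiebung (p := 2) (R := F))^[n] z).coeff (n + k)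
        = z.coeff k := by
      intro z
      have := WittVector.iterate_verschiebung_coeff (p := 2) z n k
      rwa [Nat.add_comm k n] at this
    rw [frobIter_coeff, h1, h1, frobIter_coeff]

/-- Existence of approximate solutions to `Frob^e X + X = 0` with unit leading coefficient. -/
private lemma exists_sol (e : ℕ) (hq2 : ∀ a : F, (a ^ 2 ^ e) ^ 2 ^ e = a)
    (hsurj : ∀ b : F, b ^ 2 ^ e = b → ∃ a : F, a ^ 2 ^ e + a = b) (n : ℕ) :
    ∃ X : 𝕎 F, X.coeff 0 = 1 ∧
      ∀ i < n + 1, ((WittVector.frobenius (p := 2) (R := F))^[e] X + X).coeff i = 0 := by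
  set Fr := (WittVector.frobenius (p := 2) (R := F)) with hFr
  induction n with
  | zero =>
    refine ⟨1, WittVector.one_coeff_zero 2 F, ?_⟩
    intro i hi
    interval_cases i
    rw [iterate_map_one, WittVector.add_coeff_zero, WittVector.one_coeff_zero,
      CharTwo.add_self_eq_zero]
  | succ n ih =>
    obtain ⟨X, hX0, hXs⟩ := ih
    set φX : 𝕎 F := Fr^[e] X + X with hφX
    -- φX is fixed by Fr^[e]
    have hfix : Fr^[e] φX = φX := by
      have h2 : Fr^[e] (Fr^[e] X) = X := by
        ext i
        rw [frobIter_coeff, frobIter_coeff, hq2]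
      rw [hφX, iterate_map_add, h2, add_comm]
    have hb : (φX.coeff (n + 1)) ^ 2 ^ e = φX.coeff (n + 1) := by
      conv_rhs => rw [← hfix]
      rw [frobIter_coeff]
    obtain ⟨a, ha⟩ := hsurj _ hb
    set Y : 𝕎 F := WittVector.mk 2 (fun j => if j = 0 then a else 0) with hY
    set W : 𝕎 F := (WittVector.verschiebung (p := 2) (R := F))^[n + 1] Y with hW
    have hsum : Fr^[e] (X + W) + (X + W) = φX + (Fr^[e] W + W) := by
      rw [iterate_map_add, hφX]; ring
    have hWlow : ∀ j < n + 1, W.coeff j = 0 := fun j hj => by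
      rw [hW, vlt _ _ _ hj]
    have hFrWlow : ∀ j < n + 1, ((⇑Fr)^[e] W).coeff j = 0 := fun j hj => by
      rw [hW, hFr, frob_versch, vlt _ _ _ hj]
    have hφWlow : ∀ j < n + 1, ((⇑Fr)^[e] W + W).coeff j = 0 := by
      intro j hj
      rw [add_coeff_of j _ _ (fun i hi => hFrWlow i (hi.trans hj))
        (fun i hi => hWlow i (hi.trans hj)), hFrWlow j hj, hWlow j hj, add_zero]
    have hφWtop : ((⇑Fr)^[e] W + W).coeff (n + 1) = φX.coeff (n + 1) := by
      rw [add_coeff_of (n+1) _ _ hFrWlow hWlow, hW, hFr, frob_versch, vcoeff, vcoeff,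
        frobIter_coeff, hY, WittVector.coeff_mk, if_pos rfl, ha]
    refine ⟨X + W, ?_, ?_⟩
    · rw [WittVector.add_coeff_zero, hX0, hWlow 0 (by omega), add_zero]
    · intro i hi
      rw [hsum]
      rcases Nat.lt_or_ge i (n + 1) with h | h
      · rw [add_coeff_of i _ _ (fun j hj => hXs j (hj.trans h))
          (fun j hj => hφWlow j (hj.trans h)), hXs i h, hφWlow i h, add_zero]
      · have hi' : i = n + 1 := by omega
        subst hi'
        rw [add_coeff_of (n+1) _ _ hXs hφWlow, hφWtop, CharTwo.add_self_eq_zero]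

private lemma field_count [Fintype F] (e : ℕ) (he : 0 < e)
    (hcard : Fintype.card F = (2 ^ e) ^ 2) :
    (∀ b : F, b ^ 2 ^ e = b → ∃ a : F, a ^ 2 ^ e + a = b) ∧
      Nat.card {a : F // a ^ 2 ^ e = a} = 2 ^ e := by
  set q : ℕ := 2 ^ e with hq
  have hq2 : 2 ≤ q := by
    calc 2 = 2 ^ 1 := (pow_one 2).symm
    _ ≤ 2 ^ e := Nat.pow_le_pow_right (by norm_num) he
  have hpow : ∀ a : F, (a ^ q) ^ q = a := by
    intro a
    rw [← pow_mul, ← pow_two, ← hcard, FiniteField.pow_card]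
  have hq0 : q ≠ 0 := by positivity
  have hfrob : ∀ a b : F, (a + b) ^ q = a ^ q + b ^ q := fun a b =>
    by rw [hq]; exact add_pow_char_pow a b 2 e
  -- the additive map  a ↦ a^q + a
  set L : F →+ F :=
    { toFun := fun a => a ^ q + a
      map_zero' := by simp [zero_pow hq0]
      map_add' := fun a b => by
        show (a + b) ^ q + (a + b) = (a ^ q + a) + (b ^ q + b)
        rw [hfrob]; ring } with hL
  have hLapp : ∀ a : F, L a = a ^ q + a := fun a => rfl
  have hmemker : ∀ a : F, a ∈ L.ker ↔ a ^ q = a := by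
    intro a
    rw [AddMonoidHom.mem_ker, hLapp]
    constructor
    · intro h
      have := congrArg (· + a) h
      simpa [add_assoc, CharTwo.add_self_eq_zero] using this
    · intro h; rw [h, CharTwo.add_self_eq_zero]
  -- upper bound on the kernel via roots of X^q - X
  have hub : Nat.card {a : F // a ^ q = a} ≤ q := by
    classical
    set f : F[X] := X ^ q - X with hf
    have hf0 : f ≠ 0 := by
      intro h0
      have h1 := congrArg (fun g => Polynomial.coeff g 1) h0
      rw [hf] at h1
      simp only [coeff_sub, coeff_X_pow, coeff_X_one, if_neg (by omega : ¬(1 : ℕ) = q),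
        coeff_zero] at h1
      simp at h1
    have hdeg : f.natDegree ≤ q := by
      refine le_trans (natDegree_sub_le _ _) ?_
      simp only [natDegree_X_pow, natDegree_X]
      omega
    have hsub : univ.filter (fun a : F => a ^ q = a) ⊆ f.roots.toFinset := by
      intro a ha
      simp only [mem_filter] at ha
      rw [Multiset.mem_toFinset, mem_roots hf0]
      simp [hf, IsRoot, sub_eq_zero, ha.2]
    calc Nat.card {a : F // a ^ q = a}
        = (univ.filter (fun a : F => a ^ q = a)).card := by
          rw [Nat.card_eq_fintype_card, Fintype.card_subtype]
      _ ≤ f.roots.toFinset.card := Finset.card_le_card hsub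
      _ ≤ Multiset.card f.roots := Multiset.toFinset_card_le _
      _ ≤ f.natDegree := f.card_roots'
      _ ≤ q := hdeg
  have hkerK : Nat.card L.ker = Nat.card {a : F // a ^ q = a} :=
    Nat.card_congr (Equiv.subtypeEquivRight hmemker)
  have hrle : L.range ≤ L.ker := by
    rintro x ⟨a, rfl⟩
    rw [AddMonoidHom.mem_ker, hLapp, hLapp, hfrob, hpow]
    have h2 : ∀ u v : F, u + v + (v + u) = 0 := fun u v => by
      rw [add_comm v u, CharTwo.add_self_eq_zero]
    exact h2 a (a ^ q)
  have hquot := AddSubgroup.card_eq_card_quotient_mul_card_addSubgroup L.ker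
  have hquot2 : Nat.card (F ⧸ L.ker) = Nat.card L.range :=
    Nat.card_congr (QuotientAddGroup.quotientKerEquivRange L).toEquiv
  have hrngle : Nat.card L.range ≤ Nat.card L.ker := AddSubgroup.card_le_of_le hrle
  have hcards : q ^ 2 = Nat.card L.range * Nat.card L.ker := by
    rw [← hquot2, ← hquot, Nat.card_eq_fintype_card, hcard]
  have hkerub : Nat.card L.ker ≤ q := hkerK ▸ hub
  have hkerq : Nat.card L.ker = q := by
    refine le_antisymm hkerub ?_
    have h1 : q * q ≤ Nat.card L.ker * Nat.card L.ker := by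
      calc q * q = q ^ 2 := (sq q).symm
        _ = Nat.card L.range * Nat.card L.ker := hcards
        _ ≤ Nat.card L.ker * Nat.card L.ker := Nat.mul_le_mul_right _ hrngle
    exact Nat.mul_self_le_mul_self_iff.mp h1
  have hrngq : Nat.card L.range = q := by
    have h2 : Nat.card L.range * Nat.card L.ker = q * q := by
      rw [← hcards, sq]
    rw [hkerq] at h2
    exact Nat.eq_of_mul_eq_mul_right (by omega) h2
  have hreq : L.range = L.ker :=
    AddSubgroup.eq_of_le_of_card_ge hrle (le_of_eq (hkerq.trans hrngq.symm))
  constructor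
  · intro b hb
    have hbk : b ∈ L.ker := (hmemker b).2 hb
    rw [← hreq] at hbk
    obtain ⟨a, ha⟩ := hbk
    exact ⟨a, ha⟩
  · rw [← hkerK, hkerq]

private lemma wittFrob_truncate_eq (n e : ℕ) (X : 𝕎 F) :
    wittFrob n e F (WittVector.truncate n X)
      = WittVector.truncate n ((WittVector.frobenius (p := 2) (R := F))^[e] X) := by
  apply TruncatedWittVector.ext
  intro i
  simp only [wittFrob, TruncatedWittVector.coeff_mk, WittVector.coeff_truncate,
    frobIter_coeff]

private lemma wittFrob_mul (n e : ℕ) (x y : TruncatedWittVector 2 n F) :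
    wittFrob n e F (x * y) = wittFrob n e F x * wittFrob n e F y := by
  obtain ⟨X, rfl⟩ := WittVector.truncate_surjective (p := 2) n (R := F) x
  obtain ⟨Y, rfl⟩ := WittVector.truncate_surjective (p := 2) n (R := F) y
  rw [← map_mul, wittFrob_truncate_eq, wittFrob_truncate_eq, wittFrob_truncate_eq,
    iterate_map_mul, map_mul]

private lemma fix_card [Fintype F] (n e : ℕ)
    (hK : Nat.card {a : F // a ^ 2 ^ e = a} = 2 ^ e) :
    Nat.card {y : TruncatedWittVector 2 n F // wittFrob n e F y = y} = (2 ^ e) ^ n := by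
  have eqv : {y : TruncatedWittVector 2 n F // wittFrob n e F y = y}
      ≃ (Fin n → {a : F // a ^ 2 ^ e = a}) :=
    { toFun := fun y i => ⟨y.1.coeff i, by
        have h := congrArg (TruncatedWittVector.coeff i) y.2
        simpa only [wittFrob, TruncatedWittVector.coeff_mk] using h⟩
      invFun := fun f => ⟨TruncatedWittVector.mk 2 (fun i => (f i).1), by
        apply TruncatedWittVector.ext
        intro i
        simp only [wittFrob, TruncatedWittVector.coeff_mk]
        exact (f i).2⟩
      left_inv := fun y => Subtype.ext (TruncatedWittVector.ext (fun i => by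
        simp [TruncatedWittVector.coeff_mk]))
      right_inv := fun f => funext fun i => Subtype.ext (by
        simp [TruncatedWittVector.coeff_mk]) }
  rw [Nat.card_congr eqv, Nat.card_fun, hK, Nat.card_eq_fintype_card, Fintype.card_fin]

private lemma sol_card_gen {R : Type*} [CommRing R] (Φ : R → R)
    (hΦ : ∀ x y : R, Φ (x * y) = Φ x * Φ y) (x0 : R) (hu : IsUnit x0)
    (hx0 : Φ x0 + x0 = 0) :
    Nat.card {x : R // Φ x + x = 0} = Nat.card {y : R // Φ y = y} := by
  symm
  have hfx0 : Φ x0 = -x0 := eq_neg_of_add_eq_zero_left hx0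
  have hmap : ∀ z : R, Φ z = z → Φ (x0 * z) + x0 * z = 0 := by
    intro z hz
    rw [hΦ, hz, hfx0, neg_mul, neg_add_cancel]
  let f : {y : R // Φ y = y} → {x : R // Φ x + x = 0} :=
    fun z => ⟨x0 * z.1, hmap z.1 z.2⟩
  refine Nat.card_congr (Equiv.ofBijective f ⟨?_, ?_⟩)
  · intro z w h
    exact Subtype.ext (hu.mul_left_cancel (congrArg Subtype.val h))
  · rintro ⟨y, hy⟩
    have hfy : Φ y = -y := eq_neg_of_add_eq_zero_left hy
    obtain ⟨u, hxu⟩ := id hu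
    have hx0z : x0 * (↑u⁻¹ * y) = y := by
      rw [← mul_assoc, ← hxu, Units.mul_inv, one_mul]
    have h1 : Φ (x0 * (↑u⁻¹ * y)) = -(x0 * Φ (↑u⁻¹ * y)) := by
      rw [hΦ, hfx0, neg_mul]
    rw [hx0z, hfy] at h1
    have h3 : x0 * Φ (↑u⁻¹ * y) = x0 * (↑u⁻¹ * y) :=
      (neg_injective h1).symm.trans hx0z.symm
    exact ⟨⟨↑u⁻¹ * y, hu.mul_left_cancel h3⟩, Subtype.ext hx0z⟩

private lemma sol_card [Fintype F] (n e : ℕ) (x0 : TruncatedWittVector 2 n F)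
    (hu : IsUnit x0) (hx0 : wittFrob n e F x0 + x0 = 0) :
    Nat.card {x : TruncatedWittVector 2 n F // wittFrob n e F x + x = 0}
      = Nat.card {y : TruncatedWittVector 2 n F // wittFrob n e F y = y} :=
  sol_card_gen (wittFrob n e F) (wittFrob_mul n e) x0 hu hx0

end Aux

/-- Let `p = 2`, `n ≥ 1`, `r = 2^s` a power of `2`, and `ν ≥ 1`. In the ring `W_n(F)` of
Witt vectors of length `n` over the field `F` with `r^{2ν}` elements, there is a unit `x`
with `Frob_{r^ν}(x) + x = 0`, where `Frob_{r^ν}` acts componentwise by raising to the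
`r^ν = 2^{sν}`-th power; and the set of solutions of `Frob_{r^ν}(x) + x = 0` in `W_n(F)`
has cardinality `r^{nν}`. -/
theorem stmt7 (n s ν : ℕ) (hn : 0 < n) (hs : 0 < s) (hν : 0 < ν)
    (r : ℕ) (hr : r = 2 ^ s)
    (F : Type) [Field F] [Fintype F] (hF : Fintype.card F = r ^ (2 * ν)) [CharP F 2] :
    (∃ x : TruncatedWittVector 2 n F, IsUnit x ∧ wittFrob n (s * ν) F x + x = 0) ∧
    Nat.card {x : TruncatedWittVector 2 n F // wittFrob n (s * ν) F x + x = 0}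
      = r ^ (n * ν) := by
  set e : ℕ := s * ν with he'
  have he : 0 < e := Nat.mul_pos hs hν
  have hcard2 : Fintype.card F = (2 ^ e) ^ 2 := by
    rw [hF, hr, ← pow_mul, ← pow_mul]
    congr 1
    rw [he']
    ring
  obtain ⟨hsurj, hK⟩ := field_count e he hcard2
  have hq2 : ∀ a : F, (a ^ 2 ^ e) ^ 2 ^ e = a := by
    intro a
    rw [← pow_mul]
    have h : 2 ^ e * 2 ^ e = Fintype.card F := by rw [hcard2]; ring
    rw [h, FiniteField.pow_card]
  obtain ⟨X, hX0, hXs⟩ := exists_sol e hq2 hsurj n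
  set x0 := WittVector.truncate n X with hx0def
  have hu : IsUnit x0 :=
    (WittVector.isUnit_of_coeff_zero_ne_zero X (by rw [hX0]; exact one_ne_zero)).map
      (WittVector.truncate n)
  have hx0 : wittFrob n e F x0 + x0 = 0 := by
    rw [hx0def, wittFrob_truncate_eq, ← map_add]
    apply TruncatedWittVector.ext
    intro i
    rw [WittVector.coeff_truncate, hXs i (lt_trans i.2 (by omega)),
      TruncatedWittVector.coeff_zero]
  refine ⟨⟨x0, hu, hx0⟩, ?_⟩
  rw [sol_card n e x0 hu hx0, fix_card n e hK, hr, ← pow_mul, ← pow_mul]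
  congr 1
  rw [he']
  ring
end

section
/- For integers 0 ≤ i ≤ M and 0 ≤ j ≤ N with (i,j) ≠ (0,0) and (i,j) ≠ (M,N), the quantity (M−i)·j + (N−j)·i is at least min(M, N). -/
/-- The combinatorial core of the irreducibility criterion for curves with few nodes in
`ℙ¹ × ℙ¹`: for `0 ≤ i ≤ M`, `0 ≤ j ≤ N` with `(i,j) ≠ (0,0)` and `(i,j) ≠ (M,N)`,
the intersection number `(M−i)·j + (N−j)·i` is at least `min M N`. -/
theorem stmt9 (M N i j : ℕ) (hM : 0 < M) (hN : 0 < N) (hi : i ≤ M) (hj : j ≤ N)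
    (h0 : ¬(i = 0 ∧ j = 0)) (hMN : ¬(i = M ∧ j = N)) :
    min M N ≤ (M - i) * j + (N - j) * i := by
  rcases Nat.lt_or_ge i M with hiM | hiM
  · rcases Nat.eq_zero_or_pos i with rfl | hi1
    · -- i = 0, so j ≥ 1; value is M * j ≥ M
      have hj1 : 1 ≤ j := by omega
      have : M ≤ M * j := Nat.le_mul_of_pos_right _ hj1
      have hmin : min M N ≤ M := min_le_left _ _
      simpa using le_trans hmin this
    · -- 1 ≤ i < M: sum ≥ j + (N - j) = N
      have h1 : j ≤ (M - i) * j := Nat.le_mul_of_pos_left _ (by omega)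
      have h2 : N - j ≤ (N - j) * i := Nat.le_mul_of_pos_right _ hi1
      have hmin : min M N ≤ N := min_le_right _ _
      omega
  · -- i = M, so j < N; value is (N - j) * M ≥ M
    have hiM' : i = M := le_antisymm hi hiM
    subst hiM'
    have hjN : j < N := by omega
    have : i ≤ (N - j) * i := Nat.le_mul_of_pos_left _ (by omega)
    have hmin : min i N ≤ i := min_le_left _ _
    simpa using le_trans hmin this
end

section
/- Let p be a prime, q a power of p, and H ≅ F_q (as additive group). Then the rational group algebra ℚ[H] is isomorphic to ℚ ⊕ (⊕_{a∈S} ℚ(ζ_p)) where S is a set of coset representatives of F_p* in F_q*; in particular dim_ℚ ℚ[H] = 1 + (q−1)/(p−1) · (p−1) = q and the number of ℚ-simple factors is 1 + (q−1)/(p−1). -/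
/-!
As an additive group `F_q ≅ (ℤ/p)ⁿ`; induct on `n` using `ℚ[V × ℤ/p] = ℚ[V][ℤ/p]`. Since
`X^p - 1 = (X - 1) Φ_p` with coprime factors, the Chinese remainder theorem gives
`ℚ[ℤ/p] ≅ ℚ[X]/(X^p - 1) ≅ ℚ × K` with `K = ℚ(ζ_p)`, while over `K` the polynomial `X^p - 1`
has `p` distinct roots, so `K[ℤ/p] ≅ K^p`. Group algebras commute with finite products of
coefficient rings, hence `ℚ[V] ≅ ℚ × K^m` gives
`ℚ[V][ℤ/p] ≅ ℚ[ℤ/p] × K[ℤ/p]^m ≅ ℚ × K × K^(mp)`: the number of copies of `K` grows as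
`m ↦ 1 + p m`, so it is `1 + p + ⋯ + p^(n-1) = (q - 1)/(p - 1)`.
-/

open Polynomial

namespace AdjoinRoot

variable {R : Type*} [CommRing R]

noncomputable def mulAlgEquivProd {f g : R[X]} (h : IsCoprime f g) :
    AdjoinRoot (f * g) ≃ₐ[R] AdjoinRoot f × AdjoinRoot g :=
  AlgEquiv.ofRingEquiv
    (f := (Ideal.quotEquivOfEq (Ideal.span_singleton_mul_span_singleton f g).symm).trans
      (Ideal.quotientMulEquivQuotientProd _ _ ((Ideal.isCoprime_span_singleton_iff f g).mpr h)))
    fun _ => rfl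

noncomputable def prodAlgEquivPi {ι : Type*} [Fintype ι] {f : ι → R[X]}
    (h : Pairwise fun i j => IsCoprime (f i) (f j)) :
    AdjoinRoot (∏ i, f i) ≃ₐ[R] ∀ i, AdjoinRoot (f i) :=
  AlgEquiv.ofRingEquiv
    (f := (Ideal.quotEquivOfEq (Ideal.iInf_span_singleton fun _ _ hij => h hij).symm).trans
      (Ideal.quotientInfRingEquivPiQuotient _ fun _ _ hij =>
        (Ideal.isCoprime_span_singleton_iff _ _).mpr (h hij)))
    fun _ => rfl

end AdjoinRoot

namespace AlgEquiv

variable (R : Type*) [CommSemiring R]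

def prodAssoc (A B C : Type*) [Semiring A] [Algebra R A] [Semiring B] [Algebra R B] [Semiring C]
    [Algebra R C] : ((A × B) × C) ≃ₐ[R] A × (B × C) where
  toEquiv := Equiv.prodAssoc A B C
  map_mul' _ _ := rfl
  map_add' _ _ := rfl
  commutes' _ := rfl

def piCurry (ι κ A : Type*) [Semiring A] [Algebra R A] : (ι → κ → A) ≃ₐ[R] (ι × κ → A) where
  toEquiv := (Equiv.curry ι κ A).symm
  map_mul' _ _ := rfl
  map_add' _ _ := rfl
  commutes' _ := rfl

end AlgEquiv

-- Mathlib's instance is stated for `CyclotomicField.algebra`, whereas instance search finds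
-- `DivisionRing.toRatAlgebra` on `CyclotomicField n ℚ`; the two agree only after unfolding.
instance (n : ℕ) [NeZero n] : IsCyclotomicExtension {n} ℚ (CyclotomicField n ℚ) :=
  CyclotomicField.isCyclotomicExtension n ℚ

noncomputable def adjoinRootCyclotomicAlgEquiv (n : ℕ) [NeZero n] :
    AdjoinRoot (cyclotomic n ℚ) ≃ₐ[ℚ] CyclotomicField n ℚ := by
  have hζ := IsCyclotomicExtension.zeta_spec n ℚ (CyclotomicField n ℚ)
  have hminpoly : minpoly ℚ (hζ.powerBasis ℚ).gen = cyclotomic n ℚ := by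
    rw [hζ.powerBasis_gen ℚ, cyclotomic_eq_minpoly_rat hζ (NeZero.pos n)]
  exact AdjoinRoot.equiv' _ (hζ.powerBasis ℚ)
    (by rw [hminpoly, AdjoinRoot.aeval_eq, AdjoinRoot.mk_self])
    (hminpoly ▸ minpoly.aeval ℚ _)

namespace AddMonoidAlgebra

noncomputable def zmodAlgEquivAdjoinRoot (R : Type*) [CommRing R] (n : ℕ) [NeZero n] :
    AddMonoidAlgebra R (ZMod n) ≃ₐ[R] AdjoinRoot (X ^ n - 1 : R[X]) := by
  have hroot : AdjoinRoot.root (X ^ n - 1 : R[X]) ^ n = 1 := by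
    rw [← sub_eq_zero, ← AdjoinRoot.mk_X, ← map_pow, ← map_one (AdjoinRoot.mk _), ← map_sub,
      AdjoinRoot.mk_self]
  let χ : Multiplicative (ZMod n) →* AdjoinRoot (X ^ n - 1 : R[X]) :=
    { toFun := fun a => AdjoinRoot.root _ ^ (Multiplicative.toAdd a).val
      map_one' := by simp
      map_mul' := fun a b => by
        rw [toAdd_mul, ZMod.val_add, ← pow_eq_pow_mod _ hroot, pow_add] }
  have hgen : aeval (single (1 : ZMod n) (1 : R)) (X ^ n - 1 : R[X]) = 0 := by
    rw [map_sub, map_pow, aeval_X, map_one, single_pow, one_pow, nsmul_one, ZMod.natCast_self,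
      sub_eq_zero]
    rfl
  refine AlgEquiv.ofAlgHom (lift R _ (ZMod n) χ) (AdjoinRoot.liftAlgHom _ (Algebra.ofId R _)
    (single 1 1) (by rwa [Algebra.toRingHom_ofId, ← aeval_def])) ?_ ?_
  · refine AdjoinRoot.algHom_ext ?_
    simp [χ, ZMod.val_one_eq_one_mod, ← pow_eq_pow_mod _ hroot]
  · refine algHom_ext (fun a => ?_) (Subsingleton.elim _ _)
    simp [χ, single_pow]

noncomputable def zmodAlgEquivPiOfIsPrimitiveRoot {K : Type*} [Field K] {n : ℕ} [NeZero n]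
    {ζ : K} (hζ : IsPrimitiveRoot ζ n) :
    AddMonoidAlgebra K (ZMod n) ≃ₐ[K] (nthRootsFinset n (1 : K) → K) :=
  have hsplit : X ^ n - 1 = ∏ μ : nthRootsFinset n (1 : K), (X - C (μ : K)) := by
    rw [Finset.prod_coe_sort _ fun μ => X - C μ, X_pow_sub_one_eq_prod (NeZero.pos n) hζ]
  (zmodAlgEquivAdjoinRoot K n).trans <| (AdjoinRoot.algEquivOfEq K _ _ hsplit).trans <|
    (AdjoinRoot.prodAlgEquivPi fun _ _ hμν =>
      pairwise_coprime_X_sub_C Subtype.coe_injective hμν).trans <|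
    AlgEquiv.piCongrRight fun μ => quotientSpanXSubCAlgEquiv (μ : K)

variable (R : Type*) [CommSemiring R] (G : Type*) [AddCommMonoid G]

noncomputable def prodAlgEquiv (A B : Type*) [CommSemiring A] [Algebra R A] [CommSemiring B]
    [Algebra R B] :
    AddMonoidAlgebra (A × B) G ≃ₐ[R] AddMonoidAlgebra A G × AddMonoidAlgebra B G :=
  ((scalarTensorEquiv R (M := G) (A × B)).symm.restrictScalars R).trans <|
    (Algebra.TensorProduct.comm R _ _).trans <|
    (Algebra.TensorProduct.prodRight R R _ A B).trans <|
    AlgEquiv.prodCongr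
      ((Algebra.TensorProduct.comm R _ A).trans ((scalarTensorEquiv R A).restrictScalars R))
      ((Algebra.TensorProduct.comm R _ B).trans ((scalarTensorEquiv R B).restrictScalars R))

noncomputable def piAlgEquiv {ι : Type*} [Fintype ι] [DecidableEq ι] (A : ι → Type*)
    [∀ i, CommSemiring (A i)] [∀ i, Algebra R (A i)] :
    AddMonoidAlgebra (∀ i, A i) G ≃ₐ[R] ∀ i, AddMonoidAlgebra (A i) G :=
  ((scalarTensorEquiv R (M := G) (∀ i, A i)).symm.restrictScalars R).trans <|
    (Algebra.TensorProduct.comm R _ _).trans <|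
    (Algebra.TensorProduct.piRight R R _ A).trans <|
    AlgEquiv.piCongrRight fun i =>
      (Algebra.TensorProduct.comm R _ (A i)).trans ((scalarTensorEquiv R (A i)).restrictScalars R)

end AddMonoidAlgebra

namespace PerlisWalker

open AddMonoidAlgebra

variable (p : ℕ) [Fact p.Prime]

noncomputable def ratZModAlgEquiv :
    AddMonoidAlgebra ℚ (ZMod p) ≃ₐ[ℚ] ℚ × CyclotomicField p ℚ :=
  have hfactor : X ^ p - 1 = (X - C 1) * cyclotomic p ℚ := by
    rw [mul_comm, C_1, cyclotomic_prime_mul_X_sub_one]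
  have hcoprime : IsCoprime (X - C 1) (cyclotomic p ℚ) := by
    rw [(irreducible_X_sub_C (1 : ℚ)).coprime_iff_not_dvd, dvd_iff_isRoot, IsRoot.def,
      eval_one_cyclotomic_prime]
    exact_mod_cast (Fact.out : p.Prime).ne_zero
  (zmodAlgEquivAdjoinRoot ℚ p).trans <| (AdjoinRoot.algEquivOfEq ℚ _ _ hfactor).trans <|
    (AdjoinRoot.mulAlgEquivProd hcoprime).trans <|
      AlgEquiv.prodCongr (quotientSpanXSubCAlgEquiv 1) (adjoinRootCyclotomicAlgEquiv p)

local notation "K" => CyclotomicField p ℚ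

noncomputable def zmodAlgEquivOfAlgEquiv {A : Type*} [CommRing A] [Algebra ℚ A] {ι : Type*}
    [Fintype ι] [DecidableEq ι] (e : A ≃ₐ[ℚ] ℚ × (ι → K)) :
    AddMonoidAlgebra A (ZMod p) ≃ₐ[ℚ] ℚ × (Unit ⊕ ι × nthRootsFinset p (1 : K) → K) :=
  (mapAlgEquiv ℚ (ZMod p) e).trans <|
    (prodAlgEquiv ℚ (ZMod p) ℚ _).trans <|
    (AlgEquiv.prodCongr (ratZModAlgEquiv p) <| (piAlgEquiv ℚ (ZMod p) fun _ => K).trans <|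
      AlgEquiv.piCongrRight fun _ => AlgEquiv.restrictScalars ℚ <|
        zmodAlgEquivPiOfIsPrimitiveRoot (IsCyclotomicExtension.zeta_spec p ℚ K)).trans <|
    (AlgEquiv.prodAssoc ℚ _ _ _).trans <|
    AlgEquiv.prodCongr AlgEquiv.refl <|
      (AlgEquiv.prodCongr (AlgEquiv.funUnique ℚ Unit K).symm (AlgEquiv.piCurry ℚ _ _ _)).trans
        (AlgEquiv.sumArrowEquivProdArrow _ _ ℚ K).symm

theorem nonempty_algEquiv_prod_pi (n : ℕ) :
    Nonempty (AddMonoidAlgebra ℚ (Fin n → ZMod p) ≃ₐ[ℚ]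
      ℚ × (Fin (∑ i ∈ Finset.range n, p ^ i) → K)) := by
  induction n with
  | zero =>
    rw [Finset.sum_range_zero]
    exact ⟨(uniqueAlgEquiv ℚ _).trans AlgEquiv.prodUnique.symm⟩
  | succ n ih =>
    obtain ⟨e⟩ := ih
    have hcard :
        Fintype.card (Unit ⊕ Fin (∑ i ∈ Finset.range n, p ^ i) × nthRootsFinset p (1 : K)) =
          ∑ i ∈ Finset.range (n + 1), p ^ i := by
      rw [geom_sum_succ, Fintype.card_sum, Fintype.card_prod, Fintype.card_fin, Fintype.card_coe,
        (IsCyclotomicExtension.zeta_spec p ℚ K).card_nthRootsFinset, Fintype.card_unit]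
      ring
    exact ⟨(domCongr ℚ ℚ (Fin.consLinearEquiv ℕ fun _ => ZMod p).toAddEquiv.symm).trans <|
      (curryAlgEquiv ℚ).trans <| (zmodAlgEquivOfAlgEquiv p e).trans <|
        AlgEquiv.prodCongr AlgEquiv.refl <|
          AlgEquiv.piCongrLeft ℚ (fun _ => K) (Fintype.equivFinOfCardEq hcard)⟩

end PerlisWalker

theorem stmt14_general (p n : ℕ) (hp : p.Prime) (q : ℕ) (hq : q = p ^ n)
    (F : Type) [Field F] [Fintype F] (hF : Fintype.card F = q) :
    Nonempty (AddMonoidAlgebra ℚ F ≃ₐ[ℚ]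
      (ℚ × (Fin ((q - 1) / (p - 1)) → CyclotomicField p ℚ))) ∧
    Module.finrank ℚ (AddMonoidAlgebra ℚ F) = q := by
  have : Fact p.Prime := ⟨hp⟩
  have : CharP F p := charP_of_card_eq_prime_pow (hF.trans hq)
  let _ : Algebra (ZMod p) F := ZMod.algebra F p
  have hdim : Module.finrank (ZMod p) F = n := by
    have hcard : Fintype.card F = p ^ Module.finrank (ZMod p) F := by
      rw [Module.card_eq_pow_finrank (K := ZMod p), ZMod.card]
    exact Nat.pow_right_injective hp.two_le (hcard.symm.trans (hF.trans hq))
  obtain ⟨e⟩ := PerlisWalker.nonempty_algEquiv_prod_pi p n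
  refine ⟨?_, by rw [Module.finrank_eq_card_basis (AddMonoidAlgebra.basis F ℚ), hF]⟩
  rw [hq, ← Nat.geomSum_eq hp.two_le]
  let basis := Module.finBasisOfFinrankEq (ZMod p) F hdim
  exact ⟨(AddMonoidAlgebra.domCongr ℚ ℚ basis.equivFun.toAddEquiv).trans e⟩

/-- Perlis–Walker for an elementary abelian `p`-group: if `H ≅ F_q` (as an additive group,
`q = p^n`), then the rational group algebra `ℚ[H]` is isomorphic to
`ℚ ⊕ (⊕_{a ∈ S} ℚ(ζ_p))` where `S` has `(q−1)/(p−1)` elements (coset representatives of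
`F_p^*` in `F_q^*`); in particular `dim_ℚ ℚ[H] = q` and the number of `ℚ`-simple factors
is `1 + (q−1)/(p−1)`. -/
theorem stmt14 (p n : ℕ) (hp : p.Prime) (hn : 0 < n) (q : ℕ) (hq : q = p ^ n)
    (F : Type) [Field F] [Fintype F] (hF : Fintype.card F = q) :
    Nonempty (AddMonoidAlgebra ℚ F ≃ₐ[ℚ]
      (ℚ × (Fin ((q - 1) / (p - 1)) → CyclotomicField p ℚ))) ∧
    Module.finrank ℚ (AddMonoidAlgebra ℚ F) = q :=
  stmt14_general p n hp q hq F hF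
end

section
/- Let q ≡ 2 (mod 3) be a prime power, k = F_{q^2}, K = k(u), t = u^q − u, and E the elliptic curve Y^2 + tY = X^3 over K. Then the point P = (u^{(q+1)/3}, u) lies on E(K), and for each cube root of unity ζ ∈ k and α ∈ F_q, the point P_{i,α} = (ζ^i (u+α)^{(q+1)/3}, u+α) lies on E(K). Moreover for each fixed α, the sum P_{0,α} + P_{1,α} + P_{2,α} = 0 in the group E(K). -/
/-!
Write `v = u + α`. Since `α ∈ F_q`, Frobenius gives `v^q - v = u^q - u = t`, so
`x = ζ^i v^{(q+1)/3}` satisfies `x^3 = v^{q+1} = v^2 + t v`: the points `P_{i,α}` lie on the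
horizontal line `Y = v`. The three of them have `X`-coordinates `x, ζx, ζ²x`, which sum to
`0 = -a₂`, so they are exactly the three intersections of that line with `E`, and hence add up
to zero.
-/

open WeierstrassCurve.Affine

lemma add_pow_expChar_pow_sub_add_of_pow_eq {R : Type*} [CommRing R] {p : ℕ} [ExpChar R p]
    (n : ℕ) (x : R) {a : R} (ha : a ^ p ^ n = a) :
    (x + a) ^ p ^ n - (x + a) = x ^ p ^ n - x := by
  rw [add_pow_expChar_pow, ha]
  ring

lemma RatFunc.X_add_C_ne_zero {K : Type*} [Field K] (a : K) : RatFunc.X + RatFunc.C a ≠ 0 := by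
  rw [← RatFunc.algebraMap_X, ← RatFunc.algebraMap_C, ← map_add]
  exact RatFunc.algebraMap_ne_zero (Polynomial.X_add_C_ne_zero a)

namespace WeierstrassCurve.Affine

lemma equation_pow_mul_pow {R : Type*} [CommRing R] {q m : ℕ} (hm : 3 * m = q + 1) {ζ : R}
    (hζ : ζ ^ 3 = 1) (i : ℕ) {t y : R} (ht : t = y ^ q - y) :
    Equation (⟨0, 0, t, 0, 0⟩ : Affine R) (ζ ^ i * y ^ m) y := by
  have hcube : (ζ ^ i * y ^ m) ^ 3 = y ^ q * y := by
    rw [mul_pow, ← pow_mul, ← pow_mul, mul_comm i, pow_mul, hζ, one_pow, one_mul, mul_comm, hm,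
      pow_succ]
  rw [equation_iff]
  simp only [hcube, ht]
  ring

variable {F : Type*} [Field F] [DecidableEq F] {W : Affine F}

lemma Point.some_add_some_add_some_of_Y_eq {x₁ x₂ x₃ y : F} {h₁ : W.Nonsingular x₁ y}
    {h₂ : W.Nonsingular x₂ y} {h₃ : W.Nonsingular x₃ y} (hx : x₁ ≠ x₂)
    (hsum : x₁ + x₂ + x₃ = -W.a₂) :
    Point.some _ _ h₁ + Point.some _ _ h₂ + Point.some _ _ h₃ = 0 := by
  have hslope : W.slope x₁ x₂ y y = 0 := by rw [slope_of_X_ne hx, sub_self, zero_div]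
  have hx₃ : W.addX x₁ x₂ (W.slope x₁ x₂ y y) = x₃ := by
    rw [hslope, addX]
    linear_combination -hsum
  rw [Point.add_of_X_ne hx]
  refine Point.add_of_Y_eq hx₃ ?_
  rw [addY, hx₃, negAddY, hslope, zero_mul, zero_add]

lemma Point.some_add_some_add_some_of_isPrimitiveRoot (ha₂ : W.a₂ = 0) {ζ x y : F}
    (hζ : IsPrimitiveRoot ζ 3) (hx : x ≠ 0) {h₀ : W.Nonsingular (ζ ^ 0 * x) y}
    {h₁ : W.Nonsingular (ζ ^ 1 * x) y} {h₂ : W.Nonsingular (ζ ^ 2 * x) y} :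
    Point.some _ _ h₀ + Point.some _ _ h₁ + Point.some _ _ h₂ = 0 := by
  refine Point.some_add_some_add_some_of_Y_eq ?_ ?_
  · rw [pow_zero, pow_one, ne_eq, mul_left_inj' hx]
    exact (hζ.ne_one (by norm_num)).symm
  · have hζsum := hζ.geom_sum_eq_zero (by norm_num)
    simp only [Finset.sum_range_succ, Finset.range_zero, Finset.sum_empty] at hζsum
    rw [ha₂]
    linear_combination x * hζsum

end WeierstrassCurve.Affine

open Classical in
theorem stmt17_general (p n q : ℕ) (hp : p.Prime) (hq : q = p ^ n) (hq3 : q % 3 = 2)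
    (k : Type) [Field k] [Fintype k] (hk : Fintype.card k = q ^ 2) :
    let u : RatFunc k := RatFunc.X
    let t : RatFunc k := u ^ q - u
    let W : WeierstrassCurve.Affine (RatFunc k) := ⟨0, 0, t, 0, 0⟩
    (∀ ζ : k, ζ ^ 3 = 1 → ∀ (i : ℕ) (α : k), α ^ q = α →
      W.Equation ((RatFunc.C ζ) ^ i * (u + RatFunc.C α) ^ ((q + 1) / 3))
        (u + RatFunc.C α)) ∧
    (∀ ζ : k, IsPrimitiveRoot ζ 3 → ∀ α : k, α ^ q = α →
      ∀ (h0 : W.Nonsingular ((RatFunc.C ζ) ^ 0 * (u + RatFunc.C α) ^ ((q + 1) / 3))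
          (u + RatFunc.C α))
        (h1 : W.Nonsingular ((RatFunc.C ζ) ^ 1 * (u + RatFunc.C α) ^ ((q + 1) / 3))
          (u + RatFunc.C α))
        (h2 : W.Nonsingular ((RatFunc.C ζ) ^ 2 * (u + RatFunc.C α) ^ ((q + 1) / 3))
          (u + RatFunc.C α)),
        WeierstrassCurve.Affine.Point.some _ _ h0 + WeierstrassCurve.Affine.Point.some _ _ h1 +
          WeierstrassCurve.Affine.Point.some _ _ h2 = 0) := by
  intro u t W
  subst hq
  have := Fact.mk hp
  have : CharP k p := charP_of_card_eq_prime_pow (hk.trans (pow_mul p n 2).symm)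
  have hm : 3 * ((p ^ n + 1) / 3) = p ^ n + 1 := Nat.mul_div_cancel' (by omega)
  refine ⟨fun ζ hζ i α hα => ?_, fun ζ hζ α hα h0 h1 h2 => ?_⟩
  · refine equation_pow_mul_pow hm (by rw [← map_pow, hζ, map_one]) i ?_
    exact (add_pow_expChar_pow_sub_add_of_pow_eq n u (by rw [← map_pow, hα])).symm
  · exact Point.some_add_some_add_some_of_isPrimitiveRoot (W := W) rfl
      (hζ.map_of_injective RatFunc.C.injective) (pow_ne_zero _ (RatFunc.X_add_C_ne_zero α))

open Classical in
/-- Let `q ≡ 2 (mod 3)` be a prime power, `k = F_{q²}`, `K = k(u)`, `t = u^q − u`, and `E`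
the elliptic curve `Y² + tY = X³` over `K`. Then for every cube root of unity `ζ ∈ k` and
every `α ∈ F_q` (i.e. `α^q = α`), the point
`P_{i,α} = (ζ^i (u+α)^{(q+1)/3}, u+α)` lies on `E(K)`; moreover for `ζ` a primitive cube
root of unity and each fixed `α`, `P_{0,α} + P_{1,α} + P_{2,α} = 0` in the group `E(K)`. -/
theorem stmt17 (p n q : ℕ) (hp : p.Prime) (hn : 0 < n) (hq : q = p ^ n) (hq3 : q % 3 = 2)
    (k : Type) [Field k] [Fintype k] (hk : Fintype.card k = q ^ 2) :
    let u : RatFunc k := RatFunc.X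
    let t : RatFunc k := u ^ q - u
    let W : WeierstrassCurve.Affine (RatFunc k) := ⟨0, 0, t, 0, 0⟩
    (∀ ζ : k, ζ ^ 3 = 1 → ∀ (i : ℕ) (α : k), α ^ q = α →
      W.Equation ((RatFunc.C ζ) ^ i * (u + RatFunc.C α) ^ ((q + 1) / 3))
        (u + RatFunc.C α)) ∧
    (∀ ζ : k, IsPrimitiveRoot ζ 3 → ∀ α : k, α ^ q = α →
      ∀ (h0 : W.Nonsingular ((RatFunc.C ζ) ^ 0 * (u + RatFunc.C α) ^ ((q + 1) / 3))
          (u + RatFunc.C α))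
        (h1 : W.Nonsingular ((RatFunc.C ζ) ^ 1 * (u + RatFunc.C α) ^ ((q + 1) / 3))
          (u + RatFunc.C α))
        (h2 : W.Nonsingular ((RatFunc.C ζ) ^ 2 * (u + RatFunc.C α) ^ ((q + 1) / 3))
          (u + RatFunc.C α)),
        WeierstrassCurve.Affine.Point.some _ _ h0 + WeierstrassCurve.Affine.Point.some _ _ h1 +
          WeierstrassCurve.Affine.Point.some _ _ h2 = 0) :=
  stmt17_general p n q hp hq hq3 k hk
end

section
/- Let q be an odd prime power, k = F_q, b ∈ k with b ∉ {0,1,−1}, a = b^2, t a transcendental, and E: Y^2 = X(X + 16b^2)(X + t^2) over k(u) where t = u^q − u. Then the point P with coordinates X(P) = 4bt(u^q + 4b)/u and Y(P) = 4bt(4b + t)(u^2 + 4bu)^{(q+1)/2}/u^2 lies on E(k(u)); in particular both coordinates are polynomials in u since u divides t = u^q − u. -/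
/-!
Put `c = 4b` and `v = u^q`, so that `t = v - u`. Since `c^q = c`, Frobenius gives
`(u² + cu)^q = v² + cv`, hence `Y(P)² = (ct(c + t))² (v² + cv)(u² + cu) / u⁴`, and the curve
equation at `X(P) = ct(v + c)/u` becomes a rational identity in `u, v, c` that holds in any field.
Both coordinates are polynomials because `u` divides `t` and `u² + cu`.
-/

open Polynomial

theorem FiniteField.sq_add_mul_pow_card (K : Type*) [Field K] [Fintype K] {R : Type*} [CommRing R]
    [Algebra K R] (c : K) (x : R) :
    (x ^ 2 + algebraMap K R c * x) ^ Fintype.card K =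
      (x ^ Fintype.card K) ^ 2 + algebraMap K R c * x ^ Fintype.card K := by
  change frobeniusAlgHom K R (x ^ 2 + algebraMap K R c * x) =
    frobeniusAlgHom K R x ^ 2 + algebraMap K R c * frobeniusAlgHom K R x
  rw [map_add, map_mul, map_pow, AlgHom.commutes]

theorem Odd.sq_mul_pow_succ_div_two_div {F : Type*} [Field F] {n : ℕ} (hn : Odd n) (a w d : F) :
    (a * w ^ ((n + 1) / 2) / d) ^ 2 = a ^ 2 * (w ^ n * w) / d ^ 2 := by
  rw [div_pow, mul_pow, ← pow_mul, Nat.div_mul_cancel hn.add_one.two_dvd, pow_succ w n]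

theorem WeierstrassCurve.Affine.equation_div_of_sq_eq {F : Type*} [Field F] {u v c y : F}
    (hu : u ≠ 0) (hy : y ^ 2 =
      (c * (v - u) * (c + (v - u))) ^ 2 * ((v ^ 2 + c * v) * (u ^ 2 + c * u)) / (u ^ 2) ^ 2) :
    WeierstrassCurve.Affine.Equation
      (⟨0, c ^ 2 + (v - u) ^ 2, 0, c ^ 2 * (v - u) ^ 2, 0⟩ : WeierstrassCurve F)
      (c * (v - u) * (v + c) / u) y := by
  rw [WeierstrassCurve.Affine.equation_iff, hy]
  field_simp
  ring

theorem RatFunc.exists_algebraMap_eq_div_of_dvd {K : Type*} [Field K] {f g : K[X]} (h : g ∣ f) :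
    ∃ r : K[X], algebraMap K[X] (RatFunc K) f / algebraMap K[X] (RatFunc K) g =
      algebraMap K[X] (RatFunc K) r := by
  obtain ⟨r, rfl⟩ := h
  rcases eq_or_ne g 0 with rfl | hg
  · exact ⟨0, by simp⟩
  · refine ⟨r, ?_⟩
    rw [map_mul, mul_div_cancel_left₀]
    exact (map_ne_zero_iff _ (IsFractionRing.injective K[X] (RatFunc K))).mpr hg

theorem stmt19_general (q : ℕ) (hodd : Odd q)
    (k : Type) [Field k] [Fintype k] (hk : Fintype.card k = q)
    (b : k) :
    let u : RatFunc k := RatFunc.X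
    let t : RatFunc k := u ^ q - u
    let B : RatFunc k := RatFunc.C b
    let W : WeierstrassCurve.Affine (RatFunc k) :=
      ⟨0, 16 * B ^ 2 + t ^ 2, 0, 16 * B ^ 2 * t ^ 2, 0⟩
    let Xc : RatFunc k := 4 * B * t * (u ^ q + 4 * B) / u
    let Yc : RatFunc k := 4 * B * t * (4 * B + t) * (u ^ 2 + 4 * B * u) ^ ((q + 1) / 2) / u ^ 2
    W.Equation Xc Yc ∧
    (∃ f g : Polynomial k,
      Xc = algebraMap (Polynomial k) (RatFunc k) f ∧
      Yc = algebraMap (Polynomial k) (RatFunc k) g) := by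
  intro u t B W Xc Yc
  constructor
  · have h4B : 4 * B = algebraMap k (RatFunc k) (4 * b) := by
      rw [map_mul, map_ofNat, RatFunc.algebraMap_eq_C]
    have hYc : Yc ^ 2 = (4 * B * t * (4 * B + t)) ^ 2 *
        (((u ^ q) ^ 2 + 4 * B * u ^ q) * (u ^ 2 + 4 * B * u)) / (u ^ 2) ^ 2 := by
      rw [hodd.sq_mul_pow_succ_div_two_div, h4B, ← hk, FiniteField.sq_add_mul_pow_card]
    convert WeierstrassCurve.Affine.equation_div_of_sq_eq RatFunc.X_ne_zero hYc using 3
    · rfl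
    all_goals ring
  · have hXt : (X : k[X]) ∣ X ^ q - X := dvd_sub (dvd_pow_self X hodd.pos.ne') dvd_rfl
    have hXw : (X : k[X]) ∣ X ^ 2 + 4 * C b * X :=
      dvd_add (dvd_pow_self X two_ne_zero) (dvd_mul_left X _)
    have hXc : (X : k[X]) ∣ 4 * C b * (X ^ q - X) * (X ^ q + 4 * C b) :=
      (hXt.mul_left _).mul_right _
    have hYc : (X : k[X]) ^ 2 ∣ 4 * C b * (X ^ q - X) * (4 * C b + (X ^ q - X)) *
        (X ^ 2 + 4 * C b * X) ^ ((q + 1) / 2) := by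
      have hm : (q + 1) / 2 ≠ 0 := by have := hodd.pos; omega
      simpa only [← sq] using mul_dvd_mul ((hXt.mul_left _).mul_right _) (dvd_pow hXw hm)
    obtain ⟨f, hf⟩ := RatFunc.exists_algebraMap_eq_div_of_dvd hXc
    obtain ⟨g, hg⟩ := RatFunc.exists_algebraMap_eq_div_of_dvd hYc
    refine ⟨f, g, ?_, ?_⟩
    all_goals
      simp only [← hf, ← hg, Xc, Yc, t, u, B, map_mul, map_sub, map_add, map_pow, map_ofNat,
        RatFunc.algebraMap_X, RatFunc.algebraMap_C]

/-- Let `q` be an odd prime power, `k = F_q`, `b ∈ k` with `b ∉ {0, 1, −1}`, `t = u^q − u`,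
and `E : Y² = X(X + 16b²)(X + t²)` over `k(u)`, i.e. the Weierstrass curve
`Y² = X³ + (16b² + t²)X² + 16b²t²X`. Then the point `P` with coordinates
`X(P) = 4bt(u^q + 4b)/u` and `Y(P) = 4bt(4b + t)(u² + 4bu)^{(q+1)/2}/u²` lies on
`E(k(u))`; in particular both coordinates are polynomials in `u` (since `u` divides
`t = u^q − u`). -/
theorem stmt19 (q : ℕ) (hq : ∃ p m : ℕ, p.Prime ∧ q = p ^ m ∧ 0 < m) (hodd : Odd q)
    (k : Type) [Field k] [Fintype k] (hk : Fintype.card k = q)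
    (b : k) (hb0 : b ≠ 0) (hb1 : b ≠ 1) (hbm : b ≠ -1) :
    let u : RatFunc k := RatFunc.X
    let t : RatFunc k := u ^ q - u
    let B : RatFunc k := RatFunc.C b
    let W : WeierstrassCurve.Affine (RatFunc k) :=
      ⟨0, 16 * B ^ 2 + t ^ 2, 0, 16 * B ^ 2 * t ^ 2, 0⟩
    let Xc : RatFunc k := 4 * B * t * (u ^ q + 4 * B) / u
    let Yc : RatFunc k := 4 * B * t * (4 * B + t) * (u ^ 2 + 4 * B * u) ^ ((q + 1) / 2) / u ^ 2
    W.Equation Xc Yc ∧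
    (∃ f g : Polynomial k,
      Xc = algebraMap (Polynomial k) (RatFunc k) f ∧
      Yc = algebraMap (Polynomial k) (RatFunc k) g) :=
  stmt19_general q hodd k hk b
end
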